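/- arXiv:1809.03422 — 3 statements merged into one kernel-verified Lean document; each statement's English description precedes it below -/
import Mathlib

section
/- Let p be an odd prime and f : F_{p^n} → F_p satisfy f(ax) = a^h f(x) for all a ∈ F_p^* and x ∈ F_{p^n}, for some positive even integer h with gcd(h-1, p-1) = 1. Then for any β in the Walsh support of f and any z ∈ F_p^*, the element zβ also lies in the Walsh support of f; likewise if β is outside the Walsh support then zβ is outside the Walsh support. -/
open Finset

noncomputable def xi (p : ℕ) (a : ZMod p) : ℂ :=
  Complex.exp (2 * Real.pi * Complex.I * (a.val : ℂ) / (p : ℂ))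

noncomputable def walsh (p : ℕ) (K : Type*) [Field K] [Fintype K] [Algebra (ZMod p) K]
    (f : K → ZMod p) (β : K) : ℂ :=
  ∑ x : K, xi p (f x - (Algebra.trace (ZMod p) K) (β * x))

noncomputable def sqrtPstar (p : ℕ) : ℂ :=
  if p % 4 = 1 then (Real.sqrt p : ℂ) else Complex.I * (Real.sqrt p : ℂ)

open scoped Classical in
noncomputable def quadChar (p : ℕ) (x : ZMod p) : ℤ :=
  if x = 0 then 0 else if IsSquare x then 1 else -1

noncomputable def setElt (K : Type*) [Field K] (D : Finset K) : AddMonoidAlgebra ℂ K :=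
  ∑ x ∈ D, AddMonoidAlgebra.single x (1 : ℂ)

noncomputable def Lt (p : ℕ) [NeZero p] (K : Type*) [Field K] [Fintype K]
    (f : K → ZMod p) (t : ZMod p) : AddMonoidAlgebra ℂ K :=
  ∑ j : ZMod p, xi p (j * t) • setElt K (Finset.univ.filter fun x => f x = j)

noncomputable def epow (p m : ℕ) : ℤ := quadChar p (-1) ^ (m / 2) * (p : ℤ) ^ (m / 2)

noncomputable def setEltZ (K : Type*) [Field K] (D : Finset K) : AddMonoidAlgebra ℤ K :=
  ∑ x ∈ D, AddMonoidAlgebra.single x (1 : ℤ)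

noncomputable def isPDS (K : Type*) [Field K] [Fintype K] (D : Finset K) (d l1 l2 : ℤ) : Prop :=
  setEltZ K D * (∑ x ∈ D, AddMonoidAlgebra.single (-x) (1 : ℤ)) =
    (d - l2) • (1 : AddMonoidAlgebra ℤ K) + (l1 - l2) • setEltZ K D +
      l2 • setEltZ K Finset.univ

/-!
Write `z = a ^ (h - 1)` with `a ∈ 𝔽_p^*`, possible because `x ↦ x ^ (h - 1)` permutes `𝔽_p^*`.
Substituting `x ↦ a x` in the Walsh sum and using `f (a x) = a ^ h f x` shows that
`W_f(zβ)` is obtained from `W_f(β)` by replacing the primitive root `ζ_p` with `ζ_p ^ (a ^ h)`.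
Hence `|W_f(zβ)|²` is the image of `|W_f(β)|² = W_f(β) · conj W_f(β)`, a rational polynomial
in `ζ_p`, under the Galois automorphism `ζ_p ↦ ζ_p ^ (a ^ h)` of `ℚ(ζ_p)`. Since `f` is plateaued,
`|W_f(β)|²` is rational, so it is fixed by that automorphism.
-/

open Polynomial

section RootOfUnityPowers

variable {M : Type*} [Monoid M] {p : ℕ} {ω : M}

lemma pow_val_add_of_pow_eq_one [NeZero p] (hω : ω ^ p = 1) (a b : ZMod p) :
    ω ^ (a + b).val = ω ^ a.val * ω ^ b.val := by
  rw [← pow_add, ZMod.val_add, ← pow_eq_pow_mod _ hω]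

lemma pow_val_mul_of_pow_eq_one (hω : ω ^ p = 1) (a b : ZMod p) :
    ω ^ (a * b).val = (ω ^ a.val) ^ b.val := by
  rw [← pow_mul, ZMod.val_mul, ← pow_eq_pow_mod _ hω]

end RootOfUnityPowers

theorem IsPrimitiveRoot.aeval_eq_of_aeval_eq_ratCast {K : Type*} [Field K] [CharZero K]
    {n : ℕ} (hn : 0 < n) {ζ ζ' : K} (hζ : IsPrimitiveRoot ζ n) (hζ' : IsPrimitiveRoot ζ' n)
    {P : ℚ[X]} {q : ℚ} (hq : aeval ζ P = q) : aeval ζ' P = q := by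
  have hmin : minpoly ℚ ζ' = minpoly ℚ ζ := by
    rw [← cyclotomic_eq_minpoly_rat hζ' hn, cyclotomic_eq_minpoly_rat hζ hn]
  have hdvd : minpoly ℚ ζ' ∣ P - C q := hmin ▸ minpoly.dvd ℚ ζ (by simp [hq])
  have hroot := aeval_eq_zero_of_dvd_aeval_eq_zero hdvd (minpoly.aeval ℚ ζ')
  simpa [sub_eq_zero] using hroot

section CharacterSums

variable {p : ℕ} [NeZero p] {ι : Type*} [Fintype ι]

lemma sq_norm_sum_pow_val {ω : ℂ} (hω : ω ^ p = 1) (g : ι → ZMod p) :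
    ((‖∑ x, ω ^ (g x).val‖ ^ 2 : ℝ) : ℂ) =
      aeval ω (∑ xy : ι × ι, X ^ (g xy.1 - g xy.2).val : ℚ[X]) := by
  have hω0 : ω ≠ 0 := by rintro rfl; simp [zero_pow (NeZero.ne p)] at hω
  have hconj : starRingEnd ℂ ω = ω⁻¹ :=
    (Complex.inv_eq_conj (Complex.norm_eq_one_of_pow_eq_one hω (NeZero.ne p))).symm
  have hdiff (a b : ZMod p) : ω ^ a.val * (ω ^ b.val)⁻¹ = ω ^ (a - b).val := by
    rw [mul_inv_eq_iff_eq_mul₀ (pow_ne_zero _ hω0), ← pow_val_add_of_pow_eq_one hω, sub_add_cancel]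
  rw [Complex.sq_norm, ← Complex.mul_conj, map_sum, sum_mul_sum, ← sum_product', map_sum]
  refine sum_congr rfl fun xy _ => ?_
  simp [hconj, hdiff]

theorem sq_norm_sum_pow_val_eq_of_isPrimitiveRoot {ζ ω : ℂ} (hζ : IsPrimitiveRoot ζ p)
    (hω : IsPrimitiveRoot ω p) (g : ι → ZMod p) {q : ℚ}
    (hq : ‖∑ x, ζ ^ (g x).val‖ ^ 2 = q) : ‖∑ x, ω ^ (g x).val‖ ^ 2 = q := by
  have hζq := sq_norm_sum_pow_val hζ.pow_eq_one g
  rw [hq, Complex.ofReal_ratCast] at hζq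
  have hωq := hζ.aeval_eq_of_aeval_eq_ratCast (NeZero.pos p) hω hζq.symm
  exact_mod_cast (sq_norm_sum_pow_val hω.pow_eq_one g).trans hωq

end CharacterSums

theorem ZMod.exists_ne_zero_pow_eq_of_coprime {p : ℕ} [Fact p.Prime] {m : ℕ}
    (hm : m.Coprime (p - 1)) {z : ZMod p} (hz : z ≠ 0) : ∃ a : ZMod p, a ≠ 0 ∧ a ^ m = z := by
  have hcard : (Nat.card (ZMod p)ˣ).Coprime m := by
    rwa [Nat.card_eq_fintype_card, ZMod.card_units, Nat.coprime_comm]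
  obtain ⟨u, hu⟩ := (powCoprime hcard).surjective (Units.mk0 z hz)
  exact ⟨u, u.ne_zero, by simpa using congrArg Units.val hu⟩

lemma xi_eq_pow_val {p : ℕ} (t : ZMod p) :
    xi p t = Complex.exp (2 * Real.pi * Complex.I / p) ^ t.val := by
  rw [xi, ← Complex.exp_nat_mul]
  ring_nf

section Walsh

variable {p : ℕ} [Fact p.Prime] {K : Type*} [Field K] [Fintype K] [Algebra (ZMod p) K]
  {f : K → ZMod p}

lemma walsh_algebraMap_pow_mul {h : ℕ} (hh : 0 < h)
    (hhom : ∀ a : ZMod p, a ≠ 0 → ∀ x : K, f (algebraMap (ZMod p) K a * x) = a ^ h * f x)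
    {a : ZMod p} (ha : a ≠ 0) (β : K) :
    walsh p K f (algebraMap (ZMod p) K (a ^ (h - 1)) * β) =
      ∑ x, xi p (a ^ h * (f x - Algebra.trace (ZMod p) K (β * x))) := by
  have hA : algebraMap (ZMod p) K a ≠ 0 := (_root_.map_ne_zero _).2 ha
  refine (Fintype.sum_bijective (algebraMap (ZMod p) K a * ·) (Equiv.mulLeft₀ _ hA).bijective
    _ _ fun x => ?_).symm
  have hpow : a ^ (h - 1) * a = a ^ h := pow_sub_one_mul hh.ne' a
  have hβ : algebraMap (ZMod p) K (a ^ (h - 1)) * β * (algebraMap (ZMod p) K a * x) =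
      a ^ h • (β * x) := by
    rw [Algebra.smul_def, ← hpow, map_mul]; ring
  rw [hβ, hhom a ha, map_smul, smul_eq_mul, mul_sub]

theorem sq_norm_walsh_algebraMap_pow_mul {h : ℕ} (hh : 0 < h)
    (hhom : ∀ a : ZMod p, a ≠ 0 → ∀ x : K, f (algebraMap (ZMod p) K a * x) = a ^ h * f x)
    {a : ZMod p} (ha : a ≠ 0) (β : K) {q : ℚ} (hq : ‖walsh p K f β‖ ^ 2 = q) :
    ‖walsh p K f (algebraMap (ZMod p) K (a ^ (h - 1)) * β)‖ ^ 2 = q := by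
  rw [walsh_algebraMap_pow_mul hh hhom ha β]
  simp only [walsh, xi_eq_pow_val] at hq ⊢
  set ζ := Complex.exp (2 * Real.pi * Complex.I / p)
  have hζ : IsPrimitiveRoot ζ p := Complex.isPrimitiveRoot_exp p (NeZero.ne p)
  have hc : (a ^ h).val.Coprime p := ZMod.val_coe_unit_coprime (Units.mk0 _ (pow_ne_zero h ha))
  simp only [pow_val_mul_of_pow_eq_one hζ.pow_eq_one]
  exact sq_norm_sum_pow_val_eq_of_isPrimitiveRoot hζ (hζ.pow_of_coprime _ hc) _ hq

end Walsh

open scoped Classical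

theorem stmt_2_general (p n s : ℕ) (hp : p.Prime)
    (K : Type) [Field K] [Fintype K] [Algebra (ZMod p) K]
    (f : K → ZMod p)
    (hplat : ∀ β : K, ‖walsh p K f β‖ ^ 2 = 0 ∨
      ‖walsh p K f β‖ ^ 2 = (p : ℝ) ^ (n + s))
    (h : ℕ) (hhpos : 0 < h) (hhgcd : Nat.gcd (h - 1) (p - 1) = 1)
    (hhom : ∀ a : ZMod p, a ≠ 0 → ∀ x : K,
      f (algebraMap (ZMod p) K a * x) = a ^ h * f x) :
    ∀ β : K, ∀ z : ZMod p, z ≠ 0 →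
      ((‖walsh p K f β‖ ^ 2 = (p : ℝ) ^ (n + s) →
        ‖walsh p K f (algebraMap (ZMod p) K z * β)‖ ^ 2 = (p : ℝ) ^ (n + s)) ∧
      (‖walsh p K f β‖ ^ 2 ≠ (p : ℝ) ^ (n + s) →
        ‖walsh p K f (algebraMap (ZMod p) K z * β)‖ ^ 2 ≠ (p : ℝ) ^ (n + s))) := by
  have : Fact p.Prime := ⟨hp⟩
  intro β z hz
  obtain ⟨a, ha, rfl⟩ := ZMod.exists_ne_zero_pow_eq_of_coprime hhgcd hz
  obtain ⟨q, hq⟩ : ∃ q : ℚ, ‖walsh p K f β‖ ^ 2 = q := by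
    rcases hplat β with h0 | h0
    · exact ⟨0, by simpa using h0⟩
    · exact ⟨(p : ℚ) ^ (n + s), by rw [h0]; push_cast; rfl⟩
  rw [sq_norm_walsh_algebraMap_pow_mul hhpos hhom ha β hq, ← hq]
  exact ⟨id, id⟩

theorem stmt_2 (p n s : ℕ) (hp : p.Prime) [NeZero p] (hodd : Odd p) (hn : 0 < n) (hs : s ≤ n)
    (K : Type) [Field K] [Fintype K] [DecidableEq K] [Algebra (ZMod p) K]
    (hcard : Fintype.card K = p ^ n)
    (f : K → ZMod p)
    (hplat : ∀ β : K, ‖walsh p K f β‖ ^ 2 = 0 ∨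
      ‖walsh p K f β‖ ^ 2 = (p : ℝ) ^ (n + s))
    (hf0 : f 0 = 0)
    (h : ℕ) (hheven : Even h) (hhpos : 0 < h) (hhgcd : Nat.gcd (h - 1) (p - 1) = 1)
    (hhom : ∀ a : ZMod p, a ≠ 0 → ∀ x : K,
      f (algebraMap (ZMod p) K a * x) = a ^ h * f x) :
    ∀ β : K, ∀ z : ZMod p, z ≠ 0 →
      ((‖walsh p K f β‖ ^ 2 = (p : ℝ) ^ (n + s) →
        ‖walsh p K f (algebraMap (ZMod p) K z * β)‖ ^ 2 = (p : ℝ) ^ (n + s)) ∧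
      (‖walsh p K f β‖ ^ 2 ≠ (p : ℝ) ^ (n + s) →
        ‖walsh p K f (algebraMap (ZMod p) K z * β)‖ ^ 2 ≠ (p : ℝ) ^ (n + s))) :=
  stmt_2_general p n s hp K f hplat h hhpos hhgcd hhom
end

section
/- Let n+s be even and f : F_{p^n} → F_p be an s-plateaued function with f(0)=0 and W_f(0) = ε(√(p*))^{n+s} where ε = ±1 and p* = η₀(-1)p. Then the number of solutions of f(x) = 0 is p^{n-1} + ε η₀(-1)(p-1)(√(p*))^{n+s-2}, and for each j ∈ F_p^*, the number of solutions of f(x) = j is p^{n-1} - ε η₀(-1)(√(p*))^{n+s-2}. -/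
open Finset

open scoped Classical

/-! With `ζ = exp (2πi/p)`, `W_f(0) = ∑ⱼ N_f(j) ζ^j`, and the hypothesis makes `W_f(0)` the integer
`M = ε (η₀(-1) p)^((n+s)/2)`. The only integer relation among `1, ζ, …, ζ^(p-1)` is that their sum
vanishes, so `N_f(j) = N_f(0) - M` for `j ≠ 0`; then `∑ⱼ N_f(j) = p^n` determines `N_f(0)`. -/

open Polynomial

theorem ZMod.sum_val_eq_sum_range {M : Type*} [AddCommMonoid M] (n : ℕ) [NeZero n] (g : ℕ → M) :
    ∑ j : ZMod n, g j.val = ∑ i ∈ range n, g i := by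
  obtain ⟨m, rfl⟩ := Nat.exists_eq_succ_of_ne_zero (NeZero.ne n)
  exact Fin.sum_univ_eq_sum_range g _

namespace IsPrimitiveRoot

variable {L : Type*} [Field L] [CharZero L] {p : ℕ} [hp : Fact p.Prime] {ζ : L}

theorem intCast_coeff_eq_last_of_sum_eq_zero (hζ : IsPrimitiveRoot ζ p) {a : ℕ → ℤ}
    (h : ∑ i ∈ range p, (a i : L) * ζ ^ i = 0) {i : ℕ} (hi : i < p) : a i = a (p - 1) := by
  have hdeg : (minpoly ℚ ζ).natDegree = p - 1 := by
    rw [← cyclotomic_eq_minpoly_rat hζ hp.out.pos, natDegree_cyclotomic, Nat.totient_prime hp.out]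
  have hli := linearIndependent_pow (K := ℚ) ζ
  rw [hdeg] at hli
  have hrel : ∑ i : Fin (p - 1), ((a i - a (p - 1) : ℤ) : ℚ) • ζ ^ (i : ℕ) = 0 := by
    have hsplit : range p = insert (p - 1) (range (p - 1)) := by
      rw [← range_add_one, Nat.sub_add_cancel hp.out.pos]
    have hall : ∑ i ∈ range p, ((a i - a (p - 1) : ℤ) : L) * ζ ^ i = 0 := by
      push_cast
      simp only [sub_mul, sum_sub_distrib, h, ← mul_sum, hζ.geom_sum_eq_zero hp.out.one_lt]
      simp
    rw [hsplit, sum_insert (by simp), sub_self, Int.cast_zero, zero_mul, zero_add] at hall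
    rw [← hall, Fin.sum_univ_eq_sum_range (fun i => ((a i - a (p - 1) : ℤ) : ℚ) • ζ ^ i)]
    simp [Algebra.smul_def]
  rcases lt_or_eq_of_le (Nat.le_sub_one_of_lt hi) with hi' | rfl
  · have : ((a i - a (p - 1) : ℤ) : ℚ) = 0 := Fintype.linearIndependent_iff.1 hli _ hrel ⟨i, hi'⟩
    exact sub_eq_zero.1 (by exact_mod_cast this)
  · rfl

theorem intCast_coeff_eq_of_sum_pow_val_eq_zero (hζ : IsPrimitiveRoot ζ p) {a : ZMod p → ℤ}
    (h : ∑ j : ZMod p, (a j : L) * ζ ^ j.val = 0) (j k : ZMod p) : a j = a k := by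
  have h' : ∑ i ∈ range p, (a i : L) * ζ ^ i = 0 := by
    rw [← h, ← ZMod.sum_val_eq_sum_range p (fun i => (a i : L) * ζ ^ i)]
    simp
  have hconst : ∀ j : ZMod p, a j = a ((p - 1 : ℕ) : ZMod p) := fun j => by
    simpa using hζ.intCast_coeff_eq_last_of_sum_eq_zero h' j.val_lt
  rw [hconst j, hconst k]

theorem intCast_coeff_eq_sub_of_sum_pow_val_eq (hζ : IsPrimitiveRoot ζ p) {a : ZMod p → ℤ}
    {m : ℤ} (h : ∑ j : ZMod p, (a j : L) * ζ ^ j.val = m) {j : ZMod p} (hj : j ≠ 0) :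
    a j = a 0 - m := by
  have h' : ∑ j : ZMod p, ((a - Pi.single (0 : ZMod p) m : ZMod p → ℤ) j : L) * ζ ^ j.val = 0 := by
    simp [Pi.single_apply, sub_mul, sum_sub_distrib, h]
  simpa [hj] using hζ.intCast_coeff_eq_of_sum_pow_val_eq_zero h' j 0

end IsPrimitiveRoot

theorem xi_eq_exp_pow (p : ℕ) (a : ZMod p) :
    xi p a = Complex.exp (2 * Real.pi * Complex.I / p) ^ a.val := by
  rw [xi, ← Complex.exp_nat_mul]
  ring_nf

theorem sqrtPstar_sq {p : ℕ} [Fact p.Prime] (hodd : Odd p) :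
    sqrtPstar p ^ 2 = quadChar p (-1) * p := by
  have hsqrt : (Real.sqrt p : ℂ) ^ 2 = p := by
    rw [← Complex.ofReal_pow, Real.sq_sqrt (Nat.cast_nonneg p), Complex.ofReal_natCast]
  have hmod : p % 4 = 1 ∨ p % 4 = 3 := by
    obtain ⟨m, rfl⟩ := hodd
    omega
  rw [sqrtPstar, quadChar, if_neg (neg_ne_zero.2 one_ne_zero)]
  rcases hmod with h | h
  · rw [if_pos h, if_pos (ZMod.exists_sq_eq_neg_one_iff.2 (by omega)), hsqrt]
    simp
  · rw [if_neg (by omega), if_neg (fun hsq => ZMod.exists_sq_eq_neg_one_iff.1 hsq h), mul_pow,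
      Complex.I_sq, hsqrt]
    simp

section FiberCounts

variable {p : ℕ} [Fact p.Prime] {K : Type*} [Field K] [Fintype K] [Algebra (ZMod p) K]
  {f : K → ZMod p}

theorem walsh_zero_eq_sum_card_fiber (f : K → ZMod p) :
    walsh p K f 0 =
      ∑ j : ZMod p, (#{x | f x = j} : ℂ) * Complex.exp (2 * Real.pi * Complex.I / p) ^ j.val := by
  simp only [walsh, zero_mul, map_zero, sub_zero, xi_eq_exp_pow]
  rw [← sum_fiberwise' univ f fun j => Complex.exp (2 * Real.pi * Complex.I / p) ^ j.val]
  simp [sum_const, nsmul_eq_mul]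

theorem card_fiber_eq_sub_of_walsh_zero_eq_intCast {m : ℤ} (hW : walsh p K f 0 = m)
    {j : ZMod p} (hj : j ≠ 0) : (#{x | f x = j} : ℤ) = #{x | f x = 0} - m := by
  have hζ := Complex.isPrimitiveRoot_exp p (NeZero.ne p)
  rw [walsh_zero_eq_sum_card_fiber] at hW
  exact hζ.intCast_coeff_eq_sub_of_sum_pow_val_eq (a := fun j => #{x | f x = j})
    (by exact_mod_cast hW) hj

theorem mul_card_fiber_zero_of_walsh_zero_eq_intCast {m : ℤ} (hW : walsh p K f 0 = m) :
    (p : ℤ) * #{x | f x = 0} = Fintype.card K + (p - 1) * m := by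
  have htotal : (Fintype.card K : ℤ) = ∑ j : ZMod p, (#{x | f x = j} : ℤ) := by
    rw [← card_univ, card_eq_sum_card_fiberwise (fun x _ => mem_univ (f x))]
    push_cast
    rfl
  rw [htotal, Fintype.sum_eq_add_sum_compl 0, sum_congr rfl fun j hj =>
    card_fiber_eq_sub_of_walsh_zero_eq_intCast hW (by simpa using hj),
    sum_const, card_compl, card_singleton, ZMod.card, nsmul_eq_mul, Nat.cast_sub NeZero.one_le]
  push_cast
  ring

end FiberCounts

theorem stmt_4_general (p n s : ℕ) (hp : p.Prime) (hodd : Odd p) (hn : 0 < n)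
    (K : Type) [Field K] [Fintype K] [Algebra (ZMod p) K]
    (hcard : Fintype.card K = p ^ n)
    (f : K → ZMod p)
    (hns : Even (n + s))
    (ε : ℤ)
    (hW0 : walsh p K f 0 = (ε : ℂ) * sqrtPstar p ^ (n + s)) :
    (((Finset.univ.filter fun x : K => f x = 0).card : ℤ) =
        (p : ℤ) ^ (n - 1) + ε * quadChar p (-1) * ((p : ℤ) - 1) * epow p (n + s - 2)) ∧
    ∀ j : ZMod p, j ≠ 0 →
      (((Finset.univ.filter fun x : K => f x = j).card : ℤ) =
        (p : ℤ) ^ (n - 1) - ε * quadChar p (-1) * epow p (n + s - 2)) := by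
  have : Fact p.Prime := ⟨hp⟩
  obtain ⟨k, hk⟩ := hns
  set η := quadChar p (-1)
  have hW : walsh p K f 0 = ((ε * (η * p) ^ k : ℤ) : ℂ) := by
    rw [hW0, hk, ← two_mul, pow_mul, sqrtPstar_sq hodd]
    push_cast
    rfl
  have hepow : epow p (n + s - 2) = (η * p) ^ (k - 1) := by
    rw [epow, mul_pow, show (n + s - 2) / 2 = k - 1 by omega]
  obtain ⟨k, rfl⟩ : ∃ k', k = k' + 1 := ⟨k - 1, by omega⟩
  obtain ⟨n, rfl⟩ : ∃ n', n = n' + 1 := ⟨n - 1, by omega⟩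
  have hzero := mul_card_fiber_zero_of_walsh_zero_eq_intCast hW
  rw [hcard] at hzero
  have h0 : (#{x | f x = 0} : ℤ) = p ^ n + ε * η * (p - 1) * (η * p) ^ k := by
    refine mul_left_cancel₀ (Nat.cast_ne_zero.2 hp.ne_zero : (p : ℤ) ≠ 0) ?_
    push_cast at hzero
    linear_combination hzero
  simp only [add_tsub_cancel_right, hepow]
  refine ⟨h0, fun j hj => ?_⟩
  rw [card_fiber_eq_sub_of_walsh_zero_eq_intCast hW hj, h0]
  ring

theorem stmt_4 (p n s : ℕ) (hp : p.Prime) [NeZero p] (hodd : Odd p) (hn : 0 < n) (hs : s ≤ n)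
    (K : Type) [Field K] [Fintype K] [DecidableEq K] [Algebra (ZMod p) K]
    (hcard : Fintype.card K = p ^ n)
    (f : K → ZMod p)
    (hplat : ∀ β : K, ‖walsh p K f β‖ ^ 2 = 0 ∨
      ‖walsh p K f β‖ ^ 2 = (p : ℝ) ^ (n + s))
    (hns : Even (n + s))
    (hf0 : f 0 = 0)
    (ε : ℤ) (hε : ε = 1 ∨ ε = -1)
    (hW0 : walsh p K f 0 = (ε : ℂ) * sqrtPstar p ^ (n + s)) :
    (((Finset.univ.filter fun x : K => f x = 0).card : ℤ) =
        (p : ℤ) ^ (n - 1) + ε * quadChar p (-1) * ((p : ℤ) - 1) * epow p (n + s - 2)) ∧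
    ∀ j : ZMod p, j ≠ 0 →
      (((Finset.univ.filter fun x : K => f x = j).card : ℤ) =
        (p : ℤ) ^ (n - 1) - ε * quadChar p (-1) * epow p (n + s - 2)) :=
  stmt_4_general p n s hp hodd hn K hcard f hns ε hW0
end

section
/- Let f ∈ WRP with homogeneity exponent l for g (l even, gcd(l-1,p-1)=1) and n+s even. Then in ℂ[(F_{p^n},+)]: Σ_{k,t ∈ F_p^*, k+t≠0} L_v = (p−2)(p D_{f,0} − S), where v = (k^{1-l}+t^{1-l})^{1/(1-l)}, D_{f,0} = {x : f(x)=0}, and S is the sum of all elements of F_{p^n}. -/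
open Finset

/-! For fixed `k ≠ 0` the map `t ↦ v(k, t)` is a bijection from `{t ≠ 0, k + t ≠ 0}` onto
`F_p^* \ {k}`: the map `x ↦ x^(1-l)` permutes `F_p^*` because `gcd(l - 1, p - 1) = 1`, it is odd
because `l` is even, and it sends `v(k, t)` to `k^(1-l) + t^(1-l)`. Hence the double sum is
`(p - 2) ∑_{v ≠ 0} L_v`. By orthogonality of the additive characters of `F_p`,
`∑_{v ∈ F_p} L_v = p D_{f,0}`, while `L_0 = S`. -/

theorem Set.bijOn_zpow_ne_zero {G₀ : Type*} [GroupWithZero G₀] {m : ℤ}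
    (hm : (Nat.card G₀ˣ).Coprime m.natAbs) :
    Set.BijOn (fun x : G₀ => x ^ m) {x | x ≠ 0} {x | x ≠ 0} := by
  have hbij : Function.Bijective (fun u : G₀ˣ => u ^ m) := by
    rcases Int.natAbs_eq m with hm' | hm' <;> rw [hm']
    · simpa only [zpow_natCast] using hm.pow_left_bijective
    · simp only [zpow_neg, zpow_natCast]
      exact inv_involutive.bijective.comp hm.pow_left_bijective
  refine ⟨fun x hx => zpow_ne_zero m hx, fun x hx y hy hxy => ?_, fun y hy => ?_⟩
  · have := @hbij.1 (Units.mk0 x hx) (Units.mk0 y hy) (Units.ext (by simpa using hxy))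
    simpa using congrArg Units.val this
  · obtain ⟨u, hu⟩ := hbij.2 (Units.mk0 y hy)
    exact ⟨u, u.ne_zero, by simpa using congrArg Units.val hu⟩

section Reparametrization

variable {F : Type*} [Field F] [Fintype F] [DecidableEq F] {M : Type*} [AddCommGroup M]
  {φ : F → F} (hφ : Set.BijOn φ {x | x ≠ 0} {x | x ≠ 0}) (hφ_neg : ∀ x, φ (-x) = -φ x)
  {V : F → F → F}
  (hV : ∀ k t, k ≠ 0 → t ≠ 0 → k + t ≠ 0 → V k t ≠ 0 ∧ φ (V k t) = φ k + φ t)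
include hφ hφ_neg hV

theorem sum_comp_eq_sum_erase (L : F → M) {k : F} (hk : k ≠ 0) :
    ∑ t ∈ univ.filter (fun t => t ≠ 0 ∧ k + t ≠ 0), L (V k t) =
      ∑ v ∈ (univ.filter (· ≠ 0)).erase k, L v := by
  have hinj {x y : F} (hx : x ≠ 0) (hy : y ≠ 0) (h : φ x = φ y) : x = y := hφ.injOn hx hy h
  refine sum_bij (fun t _ => V k t) (fun t ht => ?_) (fun t₁ ht₁ t₂ ht₂ h => ?_) (fun v hv => ?_)
    (fun _ _ => rfl)
  · simp only [mem_filter, mem_univ, true_and] at ht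
    obtain ⟨hV0, hVφ⟩ := hV k t hk ht.1 ht.2
    refine mem_erase.2 ⟨fun hVk => hφ.mapsTo ht.1 ?_, by simpa using hV0⟩
    rwa [hVk, left_eq_add] at hVφ
  · simp only [mem_filter, mem_univ, true_and] at ht₁ ht₂
    have h' := (hV k t₁ hk ht₁.1 ht₁.2).2
    rw [h, (hV k t₂ hk ht₂.1 ht₂.2).2, add_right_inj] at h'
    exact hinj ht₁.1 ht₂.1 h'.symm
  · simp only [mem_erase, mem_filter, mem_univ, true_and] at hv
    obtain ⟨hvk, hv0⟩ := hv
    have hdiff : φ v - φ k ≠ 0 := sub_ne_zero.2 fun h => hvk (hinj hv0 hk h)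
    obtain ⟨t, ht0 : t ≠ 0, htφ⟩ := hφ.surjOn hdiff
    -- `t = -k` is excluded since then `φ v = φ k + φ (-k) = 0`.
    have hkt : k + t ≠ 0 := by
      intro hkt
      apply hφ.mapsTo hv0
      rw [eq_neg_of_add_eq_zero_right hkt, hφ_neg] at htφ
      linear_combination -htφ
    obtain ⟨hV0, hVφ⟩ := hV k t hk ht0 hkt
    refine ⟨t, by simp [ht0, hkt], hinj hV0 hv0 ?_⟩
    rw [hVφ, htφ, add_sub_cancel]

theorem sum_sum_comp_eq_card_sub_two_zsmul (L : F → M) :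
    ∑ k ∈ univ.filter (· ≠ 0), ∑ t ∈ univ.filter (fun t => t ≠ 0 ∧ k + t ≠ 0), L (V k t) =
      ((Fintype.card F : ℤ) - 2) • ∑ v ∈ univ.filter (· ≠ 0), L v := by
  rw [sum_congr rfl fun k hk => (sum_comp_eq_sum_erase hφ hφ_neg hV L (mem_filter.1 hk).2).trans
    (sum_erase_eq_sub hk), sum_sub_distrib, sum_const]
  have hcard : #(univ.filter (· ≠ (0 : F))) + 1 = Fintype.card F := by
    rw [filter_ne', card_erase_add_one (mem_univ _), card_univ]
  rw [← hcard]
  push_cast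
  module

end Reparametrization

section Characters

variable {p : ℕ} [NeZero p]

theorem xi_eq_stdAddChar (a : ZMod p) : xi p a = ZMod.stdAddChar a := by
  rw [ZMod.stdAddChar_apply, ZMod.toCircle_apply, xi]

theorem sum_xi_mul (j : ZMod p) : ∑ t, xi p (j * t) = if j = 0 then (p : ℂ) else 0 := by
  simp_rw [xi_eq_stdAddChar, mul_comm j, AddChar.sum_mulShift j (ZMod.isPrimitive_stdAddChar p),
    ZMod.card, Nat.cast_ite, Nat.cast_zero]

variable (K : Type*) [Field K] [Fintype K] (f : K → ZMod p)

theorem Lt_zero : Lt p K f 0 = setElt K univ := by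
  simp only [Lt, mul_zero, xi_eq_stdAddChar, AddChar.map_zero_eq_one, one_smul, setElt]
  exact sum_fiberwise univ f _

theorem sum_Lt : ∑ t, Lt p K f t = (p : ℂ) • setElt K (univ.filter fun x => f x = 0) := by
  simp only [Lt]
  rw [sum_comm]
  simp_rw [← sum_smul, sum_xi_mul, ite_smul, zero_smul, sum_ite_eq', if_pos (mem_univ _)]

theorem sum_Lt_ne_zero :
    ∑ t ∈ univ.filter (· ≠ 0), Lt p K f t =
      (p : ℂ) • setElt K (univ.filter fun x => f x = 0) - setElt K univ := by
  rw [filter_ne', sum_erase_eq_sub (mem_univ _), sum_Lt, Lt_zero]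

end Characters

open scoped Classical

theorem stmt_9_general (p : ℕ) [Fact p.Prime] [NeZero p]
    (K : Type) [Field K] [Fintype K]
    (f : K → ZMod p)
    (l : ℕ) (hleven : Even l) (hlpos : 0 < l) (hlgcd : Nat.gcd (l - 1) (p - 1) = 1)
    (V : ZMod p → ZMod p → ZMod p)
    (hV : ∀ k t : ZMod p, k ≠ 0 → t ≠ 0 → k + t ≠ 0 →
      V k t ≠ 0 ∧ V k t ^ ((1 : ℤ) - l) = k ^ ((1 : ℤ) - l) + t ^ ((1 : ℤ) - l)) :
    ∑ k ∈ Finset.univ.filter (fun k : ZMod p => k ≠ 0),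
            ∑ t ∈ Finset.univ.filter (fun t : ZMod p => t ≠ 0 ∧ k + t ≠ 0),
              Lt p K f (V k t) =
      ((p : ℂ) - 2) • ((p : ℂ) • setElt K (Finset.univ.filter fun x : K => f x = 0) - setElt K Finset.univ) := by
  have hbij : Set.BijOn (fun x : ZMod p => x ^ ((1 : ℤ) - l)) {x | x ≠ 0} {x | x ≠ 0} := by
    refine Set.bijOn_zpow_ne_zero ?_
    rw [Nat.card_eq_fintype_card, ZMod.card_units, show ((1 : ℤ) - l).natAbs = l - 1 by omega]
    exact Nat.coprime_comm.1 hlgcd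
  have hodd_pow : ∀ x : ZMod p, (-x) ^ ((1 : ℤ) - l) = -x ^ ((1 : ℤ) - l) := fun x =>
    Odd.neg_zpow (by obtain ⟨c, rfl⟩ := hleven; exact ⟨-c, by push_cast; ring⟩) x
  rw [sum_sum_comp_eq_card_sub_two_zsmul hbij hodd_pow hV, sum_Lt_ne_zero, ZMod.card,
    ← Int.cast_smul_eq_zsmul ℂ]
  push_cast
  rfl

theorem stmt_9 (p n s : ℕ) (hp : p.Prime) [Fact p.Prime] [NeZero p] (hodd : Odd p) (hn : 0 < n) (hs : s ≤ n)
    (K : Type) [Field K] [Fintype K] [DecidableEq K] [Algebra (ZMod p) K]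
    (hcard : Fintype.card K = p ^ n)
    (f : K → ZMod p)
    (hplat : ∀ β : K, ‖walsh p K f β‖ ^ 2 = 0 ∨
      ‖walsh p K f β‖ ^ 2 = (p : ℝ) ^ (n + s))
    (hunbal : walsh p K f 0 ≠ 0)
    (hf0 : f 0 = 0)
    (h : ℕ) (hheven : Even h) (hhpos : 0 < h) (hhgcd : Nat.gcd (h - 1) (p - 1) = 1)
    (hhom : ∀ a : ZMod p, a ≠ 0 → ∀ x : K,
      f (algebraMap (ZMod p) K a * x) = a ^ h * f x)
    (ε : ℤ) (hε : ε = 1 ∨ ε = -1)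
    (g : K → ZMod p)
    (hwr : ∀ β : K, ‖walsh p K f β‖ ^ 2 = (p : ℝ) ^ (n + s) →
      walsh p K f β = (ε : ℂ) * sqrtPstar p ^ (n + s) * xi p (g β))
    (l : ℕ) (hleven : Even l) (hlpos : 0 < l) (hlgcd : Nat.gcd (l - 1) (p - 1) = 1)
    (hghom : ∀ a : ZMod p, a ≠ 0 → ∀ β : K,
      ‖walsh p K f β‖ ^ 2 = (p : ℝ) ^ (n + s) →
      g (algebraMap (ZMod p) K a * β) = a ^ l * g β)
    (V : ZMod p → ZMod p → ZMod p)
    (hV : ∀ k t : ZMod p, k ≠ 0 → t ≠ 0 → k + t ≠ 0 →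
      V k t ≠ 0 ∧ V k t ^ ((1 : ℤ) - l) = k ^ ((1 : ℤ) - l) + t ^ ((1 : ℤ) - l))
    (hns : Even (n + s)) :
    ∑ k ∈ Finset.univ.filter (fun k : ZMod p => k ≠ 0),
            ∑ t ∈ Finset.univ.filter (fun t : ZMod p => t ≠ 0 ∧ k + t ≠ 0),
              Lt p K f (V k t) =
      ((p : ℂ) - 2) • ((p : ℂ) • setElt K (Finset.univ.filter fun x : K => f x = 0) - setElt K Finset.univ) :=
  stmt_9_general p K f l hleven hlpos hlgcd V hV
end
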